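/- Quadratic convergence of the population state evolution for alternating minimization in phase retrieval. Define S_pop : ℝ² → ℝ² on states (α, β) with α > 0, β ≥ 0 by S_pop(α, β) = ( 1 − (2φ − sin(2φ))/π , (2/π)·sin²(φ) ), where φ = arctan(β/α). Then: (i) S_pop(ζ) ∈ 𝔾 for every ζ ∈ 𝔾 (𝔾-faithfulness); and (ii) for every ζ ∈ 𝔾 and every integer t ≥ 1, (1/20)·[d_{ℓ₂}(S_pop^t(ζ))]² ≤ d_{ℓ₂}(S_pop^{t+1}(ζ)) ≤ [d_{ℓ₂}(S_pop^t(ζ))]². -/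

import Mathlib

/-!
Put `r = β / α` and `φ = arctan r ≤ r`. Then `sin² φ = r² / (1 + r²)` and
`0 ≤ 2φ - sin 2φ ≤ (2φ)³ / 6 ≤ 4r³ / 3`, so the new `α` is within `O(r³)` of `1` while the
new `β` is about `2r² / π`. For `r ≤ 1/5` this lands `S_pop ζ` in the thin region
`0.99 ≤ α ≤ 1, 0 ≤ β ≤ 0.03, 1 - α ≤ β / 4` inside `𝔾`. On that region `d(ζ)` is comparable to `β`
and, as the second coordinate of `S_pop ζ` dominates, `d(S_pop ζ)` is comparable to `β²`.
-/

noncomputable section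

/-- The good region `𝔾 = {(α, β) : 0.55 ≤ α ≤ 1.05, 0 ≤ β ≤ α/5}`. -/
def goodRegion : Set (ℝ × ℝ) :=
  {p | 0.55 ≤ p.1 ∧ p.1 ≤ 1.05 ∧ 0 ≤ p.2 ∧ p.2 ≤ p.1 / 5}

/-- The ℓ₂ metric on states: `d_{ℓ₂}(α, β) = √((1−α)² + β²)`. -/
def dl2 (p : ℝ × ℝ) : ℝ := Real.sqrt ((1 - p.1) ^ 2 + p.2 ^ 2)

/-- Population state evolution for alternating minimization in phase retrieval. -/
def Spop (p : ℝ × ℝ) : ℝ × ℝ :=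
  (1 - (2 * Real.arctan (p.2 / p.1) - Real.sin (2 * Real.arctan (p.2 / p.1))) / Real.pi,
   2 / Real.pi * Real.sin (Real.arctan (p.2 / p.1)) ^ 2)

end

open Real

lemma Real.arctan_le_self {x : ℝ} (hx : 0 ≤ x) : arctan x ≤ x := by
  simpa only [tan_arctan] using le_tan (arctan_nonneg.2 hx) (arctan_lt_pi_div_two x)

lemma Real.sub_sin_le_cube_div_six {x : ℝ} (hx : 0 ≤ x) : x - sin x ≤ x ^ 3 / 6 := by
  rcases hx.eq_or_lt with rfl | hx
  · simp
  · linarith [sin_gt_sub_cube hx]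

lemma exists_Spop_eq_of_div_nonneg {p : ℝ × ℝ} (hr : 0 ≤ p.2 / p.1) :
    ∃ w, 0 ≤ w ∧ w ≤ 4 / 3 * (p.2 / p.1) ^ 3 ∧
      Spop p = (1 - w / π, 2 / π * ((p.2 / p.1) ^ 2 / (1 + (p.2 / p.1) ^ 2))) := by
  set r := p.2 / p.1
  have hφ : 0 ≤ 2 * arctan r := by have := arctan_nonneg.2 hr; positivity
  refine ⟨2 * arctan r - sin (2 * arctan r), by linarith [sin_le hφ], ?_, ?_⟩
  · have hφr : 2 * arctan r ≤ 2 * r := by linarith [arctan_le_self hr]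
    calc 2 * arctan r - sin (2 * arctan r) ≤ (2 * arctan r) ^ 3 / 6 := sub_sin_le_cube_div_six hφ
      _ ≤ (2 * r) ^ 3 / 6 := by gcongr
      _ = 4 / 3 * r ^ 3 := by ring
  · rw [← sin_sq_arctan]
    rfl

def imageRegion : Set (ℝ × ℝ) :=
  {p | 0.99 ≤ p.1 ∧ p.1 ≤ 1 ∧ 0 ≤ p.2 ∧ p.2 ≤ 0.03 ∧ 1 - p.1 ≤ p.2 / 4}

lemma imageRegion_subset_goodRegion : imageRegion ⊆ goodRegion := by
  rintro p ⟨h₁, h₂, h₃, h₄, -⟩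
  exact ⟨by linarith, by linarith, h₃, by linarith⟩

lemma Spop_mem_imageRegion {p : ℝ × ℝ} (hp : p ∈ goodRegion) : Spop p ∈ imageRegion := by
  obtain ⟨hα₁, -, hβ₀, hβ₁⟩ := hp
  have hα : 0 < p.1 := by linarith
  have hr₀ : 0 ≤ p.2 / p.1 := by positivity
  have hr₁ : p.2 / p.1 ≤ 1 / 5 := by rw [div_le_iff₀ hα]; linarith
  obtain ⟨w, hw₀, hw₁, hS⟩ := exists_Spop_eq_of_div_nonneg hr₀
  set r := p.2 / p.1
  set q := r ^ 2 / (1 + r ^ 2)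
  have hq₁ : q ≤ r ^ 2 := div_le_self (sq_nonneg r) (by nlinarith)
  have hwq : w ≤ q / 2 := by
    calc w ≤ 4 / 3 * r ^ 3 := hw₁
      _ ≤ q / 2 := by
        rw [le_div_iff₀ two_pos, div_mul_eq_mul_div, le_div_iff₀ (by positivity)]
        have := mul_nonneg (pow_nonneg hr₀ 2) (sub_nonneg.2 hr₁)
        nlinarith [mul_nonneg this (sq_nonneg r)]
  have hπ := pi_gt_d2
  rw [hS]
  refine ⟨?_, ?_, by positivity, ?_, ?_⟩ <;> dsimp only
  · rw [le_sub_comm, div_le_iff₀ pi_pos]; nlinarith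
  · linarith [div_nonneg hw₀ pi_pos.le]
  · rw [div_mul_eq_mul_div, div_le_iff₀ pi_pos]; nlinarith
  · calc 1 - (1 - w / π) ≤ q / 2 / π := by rw [sub_sub_cancel]; gcongr
      _ = 2 / π * q / 4 := by ring

lemma Spop_coord_bounds {p : ℝ × ℝ} (hp : p ∈ imageRegion) :
    0 ≤ 1 - (Spop p).1 ∧ 1 - (Spop p).1 ≤ p.2 ^ 2 / 50 ∧
      3 / 5 * p.2 ^ 2 ≤ (Spop p).2 ∧ (Spop p).2 ≤ 2 / 3 * p.2 ^ 2 := by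
  obtain ⟨hα₁, hα₂, hβ₀, hβ₁, -⟩ := hp
  have hα : 0 < p.1 := by linarith
  have hr₀ : 0 ≤ p.2 / p.1 := by positivity
  obtain ⟨w, hw₀, hw₁, hS⟩ := exists_Spop_eq_of_div_nonneg hr₀
  have hβ : p.2 = p.2 / p.1 * p.1 := (div_mul_cancel₀ _ hα.ne').symm
  set r := p.2 / p.1
  have hr₁ : r ≤ 1 / 32 := by rw [div_le_iff₀ hα]; linarith
  have hβ_sq_le : p.2 ^ 2 ≤ r ^ 2 := by
    rw [hβ, mul_pow]
    exact mul_le_of_le_one_right (sq_nonneg r) (by nlinarith)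
  have hβ_sq_ge : 49 / 50 * r ^ 2 ≤ p.2 ^ 2 := by
    rw [hβ, mul_pow]
    nlinarith [mul_le_mul_of_nonneg_left (show 49 / 50 ≤ p.1 ^ 2 by nlinarith) (sq_nonneg r)]
  have hπ₁ := pi_gt_d2
  have hπ₂ := pi_lt_d2
  rw [hS]
  refine ⟨?_, ?_, ?_, ?_⟩ <;> dsimp only
  · rw [sub_sub_cancel]; positivity
  · rw [sub_sub_cancel, div_le_iff₀ pi_pos]
    have := mul_nonneg (pow_nonneg hr₀ 2) (sub_nonneg.2 hr₁)
    nlinarith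
  · have hπr : π * (1 + r ^ 2) ≤ 10 / 3 := by nlinarith
    calc 3 / 5 * p.2 ^ 2 ≤ 3 / 5 * r ^ 2 := by gcongr
      _ ≤ 2 * r ^ 2 / (π * (1 + r ^ 2)) := by
          rw [le_div_iff₀ (by positivity)]
          nlinarith [mul_le_mul_of_nonneg_left hπr (sq_nonneg r)]
      _ = 2 / π * (r ^ 2 / (1 + r ^ 2)) := by field_simp
  · calc 2 / π * (r ^ 2 / (1 + r ^ 2)) ≤ 2 / π * r ^ 2 := by
          gcongr; exact div_le_self (sq_nonneg r) (by nlinarith)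
      _ ≤ 2 / 3.14 * r ^ 2 := by gcongr
      _ ≤ 2 / 3 * p.2 ^ 2 := by nlinarith

lemma dl2_sq (p : ℝ × ℝ) : dl2 p ^ 2 = (1 - p.1) ^ 2 + p.2 ^ 2 :=
  sq_sqrt (by positivity)

lemma dl2_Spop_bounds {p : ℝ × ℝ} (hp : p ∈ imageRegion) :
    1 / 20 * dl2 p ^ 2 ≤ dl2 (Spop p) ∧ dl2 (Spop p) ≤ dl2 p ^ 2 := by
  obtain ⟨hu₀, hu₁, hv₀, hv₁⟩ := Spop_coord_bounds hp
  obtain ⟨-, hα, hβ, -, hαβ⟩ := hp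
  rw [dl2_sq]
  constructor
  · calc 1 / 20 * ((1 - p.1) ^ 2 + p.2 ^ 2) ≤ 3 / 5 * p.2 ^ 2 := by nlinarith
      _ ≤ (Spop p).2 := hv₀
      _ ≤ dl2 (Spop p) := by
        rw [dl2, le_sqrt (by linarith [sq_nonneg p.2]) (by positivity)]; nlinarith
  · calc dl2 (Spop p) ≤ p.2 ^ 2 := by
          rw [dl2, sqrt_le_left (by positivity)]; nlinarith
      _ ≤ (1 - p.1) ^ 2 + p.2 ^ 2 := by nlinarith

theorem population_state_evolution_quadratic_convergence :
    (∀ ζ ∈ goodRegion, Spop ζ ∈ goodRegion) ∧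
    ∀ ζ ∈ goodRegion, ∀ t : ℕ, 1 ≤ t →
      1 / 20 * dl2 (Spop^[t] ζ) ^ 2 ≤ dl2 (Spop^[t + 1] ζ) ∧
      dl2 (Spop^[t + 1] ζ) ≤ dl2 (Spop^[t] ζ) ^ 2 := by
  have hmaps : Set.MapsTo Spop goodRegion goodRegion := fun ζ hζ ↦
    imageRegion_subset_goodRegion (Spop_mem_imageRegion hζ)
  refine ⟨hmaps, fun ζ hζ t ht ↦ ?_⟩
  obtain ⟨s, rfl⟩ := Nat.exists_eq_add_of_le' ht
  rw [Function.iterate_succ_apply' Spop (s + 1), Function.iterate_succ_apply']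
  exact dl2_Spop_bounds (Spop_mem_imageRegion (hmaps.iterate s hζ))
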